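/- The Schur multiplier H^2(C_n × C_m, C^×) of the product of two cyclic groups of orders n and m, with trivial action on C^×, is isomorphic to Z/gcd(n,m)Z. -/

import Mathlib

noncomputable instance : DivisibleBy (Additive ℂˣ) ℤ where
  div z k := if h : k = 0 then 0 else
    Additive.ofMul (Units.mk0 (Complex.exp (Complex.log ((Additive.toMul z : ℂˣ) : ℂ) / k))
      (Complex.exp_ne_zero _))
  div_zero a := by simp
  div_cancel {k} a h := by
    simp only [dif_neg h]
    apply Additive.toMul.injective
    rw [toMul_zsmul, toMul_ofMul]
    ext
    rw [Units.val_zpow_eq_zpow_val]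
    show (Complex.exp _) ^ (k:ℤ) = _
    rw [← Complex.exp_int_mul, mul_div_cancel₀ _ (by exact_mod_cast h), Complex.exp_log
      (Units.ne_zero _)]

section Pairing
variable {G M : Type} [CommGroup G] [AddCommGroup M]

/-- The commutator pairing of a 2-cocycle. -/
def Bpair (f : G × G → M) (g h : G) : M := f (g, h) - f (h, g)

variable {f : G × G → M}
  (hf : ∀ g h j : G, f (g * h, j) + f (g, h) = f (h, j) + f (g, h * j))
include hf

theorem cocy_one_left (g : G) : f (1, g) = f (1, 1) := by
  have := hf 1 1 g; simpa using this.symm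

theorem cocy_one_right (g : G) : f (g, 1) = f (1, 1) := by
  have := hf g 1 1; simpa using this

theorem Bpair_mul_left (g h j : G) : Bpair f (g * h) j = Bpair f g j + Bpair f h j := by
  have e1 := eq_sub_of_add_eq (hf g h j)
  have e2 := eq_sub_of_add_eq' ((hf j g h).symm)
  have e4 := eq_sub_of_add_eq' ((hf g j h).symm)
  rw [mul_comm j g] at e2
  rw [mul_comm h j] at e1
  simp only [Bpair, e1, e2, e4]
  abel

theorem Bpair_mul_right (g h j : G) : Bpair f g (h * j) = Bpair f g h + Bpair f g j := by
  have anti : ∀ x y : G, Bpair f x y = - Bpair f y x := fun x y => (neg_sub _ _).symm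
  rw [anti, Bpair_mul_left hf, neg_add, ← anti, ← anti]

theorem Bpair_one_left (g : G) : Bpair f 1 g = 0 := by
  simp [Bpair, cocy_one_left hf, cocy_one_right hf]

theorem Bpair_pow_left (g j : G) (k : ℕ) : Bpair f (g ^ k) j = k • Bpair f g j := by
  induction k with
  | zero => simpa using Bpair_one_left hf j
  | succ k ih => rw [pow_succ, Bpair_mul_left hf, ih, succ_nsmul]

theorem Bpair_pow_right (g j : G) (k : ℕ) : Bpair f g (j ^ k) = k • Bpair f g j := by
  have anti : ∀ x y : G, Bpair f x y = - Bpair f y x := fun x y => (neg_sub _ _).symm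
  rw [anti, Bpair_pow_left hf, anti g j, smul_neg]

theorem Bpair_all_zero (a b : G) (hGen : ∀ g : G, ∃ i j : ℕ, g = a ^ i * b ^ j)
    (hab : Bpair f a b = 0) (x y : G) : Bpair f x y = 0 := by
  have anti : ∀ x y : G, Bpair f x y = - Bpair f y x := fun x y => (neg_sub _ _).symm
  have hba : Bpair f b a = 0 := by rw [anti, hab, neg_zero]
  have hself : ∀ u : G, Bpair f u u = 0 := fun u => sub_self _
  obtain ⟨i, j, rfl⟩ := hGen x
  obtain ⟨k, l, rfl⟩ := hGen y
  rw [Bpair_mul_left hf, Bpair_pow_left hf, Bpair_pow_left hf,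
    Bpair_mul_right hf, Bpair_mul_right hf, Bpair_pow_right hf, Bpair_pow_right hf,
    Bpair_pow_right hf, Bpair_pow_right hf, hself, hab, hba, hself]
  simp

end Pairing

section ModSmul
variable {M : Type} [AddCommGroup M] {z : M} {k : ℕ}

theorem smul_mod' (hk : k • z = 0) (x : ℕ) : (x % k) • z = x • z := by
  conv_rhs => rw [← Nat.mod_add_div x k]
  rw [add_smul, Nat.mul_comm, mul_smul, hk, smul_zero, add_zero]

theorem mod_mul_smul' (hk : k • z = 0) (x c : ℕ) : ((x % k) * c) • z = (x * c) • z := by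
  rw [mul_comm, mul_smul, smul_mod' hk, ← mul_smul, mul_comm]

theorem mul_mod_smul' (hk : k • z = 0) (c x : ℕ) : (c * (x % k)) • z = (c * x) • z := by
  rw [mul_smul, smul_mod' hk, ← mul_smul]

end ModSmul

open Classical in
theorem coboundary_of_symm {G : Type} [CommGroup G] (f : G × G → Additive ℂˣ)
    (hf : ∀ g h j : G, f (g * h, j) + f (g, h) = f (h, j) + f (g, h * j))
    (hs : ∀ g h : G, f (g, h) = f (h, g)) :
    ∃ x : G → Additive ℂˣ, ∀ g h : G, x h - x (g * h) + x g = f (g, h) := by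
  set c := f (1, 1) with hc
  set f' : G × G → Additive ℂˣ := fun p => f p - c with hf'def
  have hone_l : ∀ g, f (1, g) = c := fun g => by have := hf 1 1 g; simpa using this.symm
  have hone_r : ∀ g, f (g, 1) = c := fun g => by have := hf g 1 1; simpa using this
  have hf' : ∀ g h j : G, f' (g * h, j) + f' (g, h) = f' (h, j) + f' (g, h * j) := by
    intro g h j
    simp only [hf'def]
    have := hf g h j
    linear_combination (norm := abel) this
  have hn_l : ∀ g, f' (1, g) = 0 := fun g => by simp [hf'def, hone_l g]
  have hn_r : ∀ g, f' (g, 1) = 0 := fun g => by simp [hf'def, hone_r g]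
  letI addI : Add (Additive ℂˣ × G) := ⟨fun x y => (x.1 + y.1 + f' (x.2, y.2), x.2 * y.2)⟩
  letI zeroI : Zero (Additive ℂˣ × G) := ⟨((0 : Additive ℂˣ), (1 : G))⟩
  letI negI : Neg (Additive ℂˣ × G) := ⟨fun x => (-x.1 - f' (x.2⁻¹, x.2), x.2⁻¹)⟩
  letI : AddCommGroup (Additive ℂˣ × G) :=
  { add := (· + ·)
    zero := 0
    neg := Neg.neg
    nsmul := nsmulRec
    zsmul := zsmulRec
    add_assoc := by
      intro x y z
      show (_, _) = (_, _)
      refine Prod.ext ?_ (mul_assoc _ _ _)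
      show x.1 + y.1 + f' (x.2, y.2) + z.1 + f' (x.2 * y.2, z.2)
          = x.1 + (y.1 + z.1 + f' (y.2, z.2)) + f' (x.2, y.2 * z.2)
      have := hf' x.2 y.2 z.2
      linear_combination (norm := abel) this
    zero_add := by
      intro x
      show (0 + x.1 + f' (1, x.2), 1 * x.2) = x
      rw [hn_l, one_mul]; simp
    add_zero := by
      intro x
      show (x.1 + 0 + f' (x.2, 1), x.2 * 1) = x
      rw [hn_r, mul_one]; simp
    neg_add_cancel := by
      intro x
      show (-x.1 - f' (x.2⁻¹, x.2) + x.1 + f' (x.2⁻¹, x.2), x.2⁻¹ * x.2) = (0, 1)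
      refine Prod.ext (by abel) (inv_mul_cancel _)
    add_comm := by
      intro x y
      show (_, _) = (_, _)
      refine Prod.ext ?_ (mul_comm _ _)
      show x.1 + y.1 + f' (x.2, y.2) = y.1 + x.1 + f' (y.2, x.2)
      have : f' (x.2, y.2) = f' (y.2, x.2) := by simp only [hf'def, hs x.2 y.2]
      rw [this]; abel }
  have baer : Module.Baer ℤ (Additive ℂˣ) := Module.Baer.of_divisible _
  let i : Additive ℂˣ →+ (Additive ℂˣ × G) :=
  { toFun := fun u => (u, 1)
    map_zero' := rfl
    map_add' := by
      intro u v
      show (u + v, 1) = (u + v + f' (1, 1), 1 * 1)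
      rw [hn_l, one_mul, add_zero] }
  have hinj : Function.Injective i := fun u v h => congrArg Prod.fst h
  obtain ⟨r, hr⟩ := baer.extension_property_addMonoidHom i hinj (AddMonoidHom.id _)
  have hri : ∀ u, r (u, 1) = u := fun u => DFunLike.congr_fun hr u
  have key : ∀ g h : G, r (0, g) + r (0, h) = f' (g, h) + r (0, g * h) := by
    intro g h
    have e : ((0 : Additive ℂˣ), g) + ((0 : Additive ℂˣ), h)
        = ((f' (g, h), (1 : G))) + ((0 : Additive ℂˣ), g * h) := by
      show (0 + 0 + f' (g, h), g * h) = (f' (g, h) + 0 + f' (1, g * h), 1 * (g * h))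
      rw [hn_l, one_mul]
      refine Prod.ext (by abel) rfl
    rw [← map_add, e, map_add, hri]
  refine ⟨fun g => r (0, g) + c, fun g h => ?_⟩
  have hfc : f (g, h) = f' (g, h) + c := by simp [hf'def]
  rw [hfc]
  rw [show f' (g, h) = r (0, g) + r (0, h) - r (0, g * h) from eq_sub_of_add_eq (key g h).symm]
  rw [add_sub_add_right_eq_sub]
  simp only [sub_eq_add_neg]
  ac_rfl
open groupCohomology

section Compat
variable {G : Type} [Group G] (A : Rep ℤ G)

def twoCoboundaries : AddSubgroup (cocycles₂ A) :=
  (coboundaries₂ A).toAddSubgroup.comap (cocycles₂ A).subtype.toAddMonoidHom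

abbrev H2q := cocycles₂ A ⧸ twoCoboundaries A

variable {A}

theorem mem_twoCoboundaries_iff (f : cocycles₂ A) :
    f ∈ twoCoboundaries A ↔ ∃ x : G → A, ∀ g h : G, A.ρ g (x h) - x (g * h) + x g = f (g, h) := by
  change (f : G × G → A) ∈ coboundaries₂ A ↔ _
  constructor
  · rintro ⟨x, hx⟩
    exact ⟨x, fun g h => by rw [← hx]; rfl⟩
  · rintro ⟨x, hx⟩
    exact ⟨x, funext fun p => hx p.1 p.2⟩

end Compat

section Specific
variable (n m : ℕ)

abbrev GG := Multiplicative (ZMod n × ZMod m)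
noncomputable abbrev AA : Rep ℤ (GG n m) := Rep.trivial ℤ (GG n m) (Additive ℂˣ)

def ga : GG n m := Multiplicative.ofAdd (1, 0)

noncomputable def plainOf (fc : cocycles₂ (AA n m)) :
    GG n m × GG n m → Additive ℂˣ := ⇑fc
def gb : GG n m := Multiplicative.ofAdd (0, 1)

lemma gen_decomp [NeZero n] [NeZero m] (g : GG n m) :
    ∃ i j : ℕ, g = ga n m ^ i * gb n m ^ j := by
  refine ⟨(Multiplicative.toAdd g).1.val, (Multiplicative.toAdd g).2.val, ?_⟩
  apply Multiplicative.toAdd.injective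
  simp only [ga, gb, toAdd_mul, toAdd_pow, toAdd_ofAdd, Prod.smul_mk, smul_zero,
    Prod.mk_add_mk, add_zero, zero_add, nsmul_eq_mul, mul_one]
  rw [ZMod.natCast_zmod_val, ZMod.natCast_zmod_val]

lemma ga_pow_n [NeZero n] : ga n m ^ n = 1 := by
  apply Multiplicative.toAdd.injective
  simp only [ga, toAdd_pow, toAdd_ofAdd, Prod.smul_mk, smul_zero, nsmul_eq_mul, mul_one,
    ZMod.natCast_self, toAdd_one]
  rfl

lemma gb_pow_m [NeZero m] : gb n m ^ m = 1 := by
  apply Multiplicative.toAdd.injective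
  simp only [gb, toAdd_pow, toAdd_ofAdd, Prod.smul_mk, smul_zero, nsmul_eq_mul, mul_one,
    ZMod.natCast_self, toAdd_one]
  rfl

/-- The standard bilinear cocycle attached to a torsion element `z`. -/
def czf (z : Additive ℂˣ) : GG n m × GG n m → Additive ℂˣ := fun p =>
  ((Multiplicative.toAdd p.1).2.val * (Multiplicative.toAdd p.2).1.val) • z

theorem smul_mod'' {M : Type} [AddCommGroup M] {z : M} {k : ℕ} (hk : k • z = 0) (x : ℕ) :
    (x % k) • z = x • z := by
  conv_rhs => rw [← Nat.mod_add_div x k]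
  rw [add_smul, Nat.mul_comm, mul_smul, hk, smul_zero, add_zero]

theorem mod_mul_smul'' {M : Type} [AddCommGroup M] {z : M} {k : ℕ} (hk : k • z = 0) (x c : ℕ) :
    ((x % k) * c) • z = (x * c) • z := by
  rw [mul_comm, mul_smul, smul_mod'' hk, ← mul_smul, mul_comm]

theorem mul_mod_smul'' {M : Type} [AddCommGroup M] {z : M} {k : ℕ} (hk : k • z = 0) (c x : ℕ) :
    (c * (x % k)) • z = (c * x) • z := by
  rw [mul_smul, smul_mod'' hk, ← mul_smul]

lemma czf_cocy [NeZero n] [NeZero m] (z : Additive ℂˣ) (hzn : n • z = 0) (hzm : m • z = 0)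
    (g h j : GG n m) :
    czf n m z (g * h, j) + czf n m z (g, h) = czf n m z (h, j) + czf n m z (g, h * j) := by
  simp only [czf, toAdd_mul, Prod.snd_add, Prod.fst_add, ZMod.val_add]
  rw [mod_mul_smul'' hzm, mul_mod_smul'' hzn]
  simp only [add_mul, mul_add, add_smul]
  abel

lemma czf_mem [NeZero n] [NeZero m] (z : Additive ℂˣ) (hzn : n • z = 0) (hzm : m • z = 0) :
    czf n m z ∈ cocycles₂ (AA n m) := by
  rw [mem_cocycles₂_iff]
  intro g h j
  exact czf_cocy n m z hzn hzm g h j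

lemma czf_pair [NeZero n] [NeZero m] (z : Additive ℂˣ) (hzn : n • z = 0) (hzm : m • z = 0) :
    czf n m z (ga n m, gb n m) - czf n m z (gb n m, ga n m) = -z := by
  simp only [czf, ga, gb, toAdd_ofAdd, ZMod.val_zero, ZMod.val_one_eq_one_mod, zero_mul,
    mul_zero, zero_smul]
  rw [mod_mul_smul'' hzm, mul_mod_smul'' hzn, one_mul, one_smul, zero_sub]

end Specific

set_option maxHeartbeats 1000000 in
set_option synthInstance.maxHeartbeats 400000 in
open groupCohomology in
/-- The Schur multiplier `H²(C_n × C_m, ℂˣ)` (group cohomology with trivial action on `ℂˣ`)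
of a product of cyclic groups of orders `n` and `m` is isomorphic to `ℤ/gcd(n,m)ℤ`. -/
theorem stmt1 (n m : ℕ) (hn : 0 < n) (hm : 0 < m) :
    Nonempty
      ((groupCohomology
          (Rep.trivial ℤ (Multiplicative (ZMod n × ZMod m)) (Additive ℂˣ)) 2) ≃+
        ZMod (Nat.gcd n m)) := by
  haveI : NeZero n := ⟨hn.ne'⟩
  haveI : NeZero m := ⟨hm.ne'⟩
  set d := Nat.gcd n m with hd
  haveI : NeZero d := ⟨Nat.gcd_ne_zero_left hn.ne'⟩
  have hζ : IsPrimitiveRoot (Complex.exp (2 * Real.pi * Complex.I / d)) d :=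
    Complex.isPrimitiveRoot_exp d (NeZero.ne d)
  set ζu : ℂˣ := (hζ.isUnit (NeZero.ne d)).unit with hζu_def
  have hζu : IsPrimitiveRoot ζu d := hζ.isUnit_unit (NeZero.ne d)
  set ω : Additive ℂˣ := Additive.ofMul ζu with hω
  have hωd : d • ω = 0 := by
    apply Additive.toMul.injective
    rw [toMul_nsmul]
    exact hζu.pow_eq_one
  have hωn : n • ω = 0 := by
    obtain ⟨k, hk⟩ := Nat.gcd_dvd_left n m
    rw [← hd] at hk
    rw [hk, mul_comm, mul_smul, hωd, smul_zero]
  have hωm : m • ω = 0 := by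
    obtain ⟨k, hk⟩ := Nat.gcd_dvd_right n m
    rw [← hd] at hk
    rw [hk, mul_comm, mul_smul, hωd, smul_zero]
  set c0 : cocycles₂ (AA n m) := ⟨czf n m ω, czf_mem n m ω hωn hωm⟩ with hc0
  have hc0plain : plainOf n m c0 = czf n m ω := rfl
  -- cocycle condition in plain form
  have plain_cocy : ∀ fc : cocycles₂ (AA n m), ∀ g h j : GG n m,
      plainOf n m fc (g * h, j) + plainOf n m fc (g, h)
        = plainOf n m fc (h, j) + plainOf n m fc (g, h * j) := by
    intro fc g h j
    have := (mem_cocycles₂_iff (A := AA n m) fc).1 fc.2 g h j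
    exact this
  -- the pairing kills coboundaries
  have Lcob : ∀ fc : cocycles₂ (AA n m), fc ∈ twoCoboundaries (AA n m) →
      plainOf n m fc (ga n m, gb n m) - plainOf n m fc (gb n m, ga n m) = 0 := by
    intro fc hfc
    obtain ⟨x, hx⟩ := (mem_twoCoboundaries_iff fc).1 hfc
    have h1 := hx (ga n m) (gb n m)
    have h2 := hx (gb n m) (ga n m)
    simp only [Rep.trivial_ρ_apply] at h1 h2
    rw [mul_comm] at h2
    show plainOf n m fc (ga n m, gb n m) - plainOf n m fc (gb n m, ga n m) = 0
    have h1' : x (gb n m) - x (ga n m * gb n m) + x (ga n m)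
        = plainOf n m fc (ga n m, gb n m) := h1
    have h2' : x (ga n m) - x (ga n m * gb n m) + x (gb n m)
        = plainOf n m fc (gb n m, ga n m) := h2
    rw [← h1', ← h2']
    abel
  have hdc : (d : ℤ) • (QuotientAddGroup.mk c0 : H2q (AA n m)) = 0 := by
    rw [← QuotientAddGroup.mk_zsmul, QuotientAddGroup.eq_zero_iff]
    have : (d : ℤ) • c0 = 0 := by
      ext g h : 1
      show (d : ℤ) • (czf n m ω (g, h)) = 0
      simp only [czf]
      rw [natCast_zsmul, smul_comm, hωd, smul_zero]
    rw [this]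
    exact AddSubgroup.zero_mem _
  set ψ : ZMod d →+ H2q (AA n m) :=
    ZMod.lift d ⟨zmultiplesHom _ (QuotientAddGroup.mk c0), by
      simpa [zmultiplesHom_apply] using hdc⟩ with hψ
  have ψ_int : ∀ j : ℤ, ψ ((j : ZMod d)) = j • (QuotientAddGroup.mk c0 : H2q (AA n m)) :=
    fun j => by rw [hψ]; simpa [zmultiplesHom_apply] using ZMod.lift_coe d _ j
  -- injectivity
  have hinj : Function.Injective ψ := by
    rw [injective_iff_map_eq_zero]
    intro k hk
    have hk' : ψ (((k.val : ℤ) : ZMod d)) = 0 := by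
      rwa [Int.cast_natCast, ZMod.natCast_zmod_val]
    rw [ψ_int, ← QuotientAddGroup.mk_zsmul, QuotientAddGroup.eq_zero_iff] at hk'
    have hL := Lcob _ hk'
    have hsm : ∀ p : GG n m × GG n m,
        plainOf n m ((k.val : ℤ) • c0) p = (k.val : ℤ) • (czf n m ω p) := fun p => rfl
    rw [hsm, hsm, ← zsmul_sub, czf_pair n m ω hωn hωm] at hL
    have hωz : (k.val : ℤ) • ω = 0 := by
      rw [zsmul_neg] at hL
      rw [← neg_neg ((k.val : ℤ) • ω), hL, neg_zero]
    have hpow : ζu ^ (k.val) = 1 := by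
      have := congrArg Additive.toMul hωz
      rwa [natCast_zsmul, toMul_nsmul] at this
    have hdvd : d ∣ k.val := (hζu.pow_eq_one_iff_dvd _).1 hpow
    have : k.val = 0 := Nat.eq_zero_of_dvd_of_lt hdvd (ZMod.val_lt k)
    exact (ZMod.val_eq_zero k).1 this
  -- surjectivity
  have hsurj : Function.Surjective ψ := by
    intro y
    obtain ⟨fc, rfl⟩ := QuotientAddGroup.mk_surjective y
    have hcf := plain_cocy fc
    set β : Additive ℂˣ :=
      plainOf n m fc (ga n m, gb n m) - plainOf n m fc (gb n m, ga n m) with hβ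
    have hβn : n • β = 0 := by
      have h1 : Bpair (plainOf n m fc) (ga n m ^ n) (gb n m)
          = n • β := Bpair_pow_left hcf _ _ n
      rw [ga_pow_n] at h1
      rw [← h1, Bpair_one_left hcf]
    have hβm : m • β = 0 := by
      have h1 : Bpair (plainOf n m fc) (ga n m) (gb n m ^ m)
          = m • β := Bpair_pow_right hcf _ _ m
      rw [gb_pow_m] at h1
      rw [← h1]
      have anti : Bpair (plainOf n m fc) (ga n m) 1
          = - Bpair (plainOf n m fc) 1 (ga n m) := (neg_sub _ _).symm
      rw [anti, Bpair_one_left hcf, neg_zero]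
    have hβd : d • β = 0 := by
      have hb := Nat.gcd_eq_gcd_ab n m
      have hz : (d : ℤ) • β = 0 := by
        rw [hd, hb, add_zsmul, mul_comm ((n : ℤ)), mul_comm ((m : ℤ)), mul_zsmul, mul_zsmul,
          natCast_zsmul, natCast_zsmul, hβn, hβm, smul_zero, smul_zero, add_zero]
      rwa [natCast_zsmul] at hz
    have hβpow : (Additive.toMul β) ^ d = 1 := by
      rw [← toMul_nsmul, hβd]; rfl
    have hmem : Additive.toMul β ∈ Subgroup.zpowers ζu := by
      rw [hζu.zpowers_eq]
      exact (mem_rootsOfUnity d _).2 hβpow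
    obtain ⟨j, hj⟩ := hmem
    refine ⟨((-j : ℤ) : ZMod d), ?_⟩
    rw [ψ_int]
    set g : cocycles₂ (AA n m) := fc + j • c0 with hg
    have hgplain : ∀ p : GG n m × GG n m,
        plainOf n m g p = plainOf n m fc p + j • (czf n m ω p) := fun p => rfl
    have hgc : ∀ x y z : GG n m,
        plainOf n m g (x * y, z) + plainOf n m g (x, y)
          = plainOf n m g (y, z) + plainOf n m g (x, y * z) := plain_cocy g
    have hgpair : Bpair (plainOf n m g) (ga n m) (gb n m) = 0 := by
      show plainOf n m g (ga n m, gb n m) - plainOf n m g (gb n m, ga n m) = 0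
      rw [hgplain, hgplain]
      have hstep : plainOf n m fc (ga n m, gb n m) + j • czf n m ω (ga n m, gb n m)
          - (plainOf n m fc (gb n m, ga n m) + j • czf n m ω (gb n m, ga n m))
          = β + j • (czf n m ω (ga n m, gb n m) - czf n m ω (gb n m, ga n m)) := by
        rw [hβ, zsmul_sub]; abel
      rw [hstep, czf_pair n m ω hωn hωm, zsmul_neg]
      have hjω : j • ω = β := by
        apply Additive.toMul.injective
        rw [toMul_zsmul]
        exact hj
      rw [hjω]; abel
    have hsymm : ∀ x y : GG n m, plainOf n m g (x, y) = plainOf n m g (y, x) := by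
      intro x y
      have := Bpair_all_zero hgc (ga n m) (gb n m) (gen_decomp n m) hgpair x y
      rwa [Bpair, sub_eq_zero] at this
    obtain ⟨x, hx⟩ := coboundary_of_symm (plainOf n m g) hgc hsymm
    have hgmem : g ∈ twoCoboundaries (AA n m) := by
      rw [mem_twoCoboundaries_iff]
      refine ⟨x, fun p q => ?_⟩
      exact hx p q
    have hq : (QuotientAddGroup.mk fc : H2q (AA n m))
        + j • (QuotientAddGroup.mk c0 : H2q (AA n m)) = 0 := by
      have hz := (QuotientAddGroup.eq_zero_iff _).2 hgmem
      rw [hg, QuotientAddGroup.mk_add, QuotientAddGroup.mk_zsmul] at hz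
      exact hz
    rw [neg_smul]
    exact (eq_neg_of_add_eq_zero_left hq).symm
  have hsurjπ : Function.Surjective (H2π (AA n m)).hom :=
    (ModuleCat.epi_iff_surjective _).1 inferInstance
  have hker : (H2π (AA n m)).hom.toAddMonoidHom.ker = twoCoboundaries (AA n m) := by
    ext x
    rw [AddMonoidHom.mem_ker]
    exact H2π_eq_zero_iff x
  let e : (groupCohomology (AA n m) 2) ≃+ H2q (AA n m) :=
    ((QuotientAddGroup.quotientAddEquivOfEq hker).symm.trans
      (QuotientAddGroup.quotientKerEquivOfSurjective _ hsurjπ)).symm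
  exact ⟨e.trans (AddEquiv.ofBijective ψ ⟨hinj, hsurj⟩).symm⟩
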